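/- The Fibonacci word is not eventually periodic. -/

import Mathlib

/-- The Fibonacci substitution 0 → 01, 1 → 0 on words over {0,1}. -/
def fibSubst (l : List (Fin 2)) : List (Fin 2) :=
  l.flatMap fun a => if a = 0 then [0, 1] else [0]

/-- The Fibonacci word, fixed point of the substitution 0 → 01, 1 → 0 starting from 0. -/
def fibWord (n : ℕ) : Fin 2 := ((fibSubst^[n + 2]) [0]).getD n 0

/-!
In an eventually periodic word every letter has a rational frequency: if `p` is a period, the
number `Z n` of zeros among the first `n` letters satisfies `p * Z n - c * n = O(1)` for some
integer `c`. In the Fibonacci word the prefix of length `F (k + 2)` is `fibSubst^[k] [0]`, which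
contains `F (k + 1)` zeros, so `p * F (k + 1) - c * F (k + 2)` would stay bounded. Since
`F (k + 2) - φ * F (k + 1) = ψ ^ (k + 1)` is bounded, this forces `p = c * φ`, contradicting the
irrationality of the golden ratio.
-/

open Real Finset
open scoped goldenRatio

section Frequency

variable {α : Type*} [DecidableEq α]

def countPrefix (f : ℕ → α) (a : α) (n : ℕ) : ℕ := ((List.range n).map f).count a

theorem countPrefix_succ (f : ℕ → α) (a : α) (n : ℕ) :
    countPrefix f a (n + 1) = countPrefix f a n + if f n = a then 1 else 0 := by
  simp [countPrefix, List.range_succ, List.count_singleton]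

theorem countPrefix_add_sub_eq_of_periodic {f : ℕ → α} {p N : ℕ}
    (hf : ∀ n ≥ N, f (n + p) = f n) (a : α) {n : ℕ} (hn : N ≤ n) :
    (countPrefix f a (n + p) : ℤ) - countPrefix f a n =
      countPrefix f a (N + p) - countPrefix f a N := by
  induction n, hn using Nat.le_induction with
  | base => rfl
  | succ n hn ih =>
    rw [← ih, Nat.add_right_comm, countPrefix_succ, countPrefix_succ, hf n hn]
    push_cast
    ring

theorem exists_lt_apply_eq_of_periodic {β : Type*} {g : ℕ → β} {p N : ℕ} (hp : 0 < p)
    (hg : ∀ n ≥ N, g (n + p) = g n) (n : ℕ) : ∃ m < N + p, g n = g m := by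
  induction n using Nat.strong_induction_on with
  | _ n ih =>
    by_cases hn : n < N + p
    · exact ⟨n, hn, rfl⟩
    · obtain ⟨m, hm, hgm⟩ := ih (n - p) (by omega)
      refine ⟨m, hm, ?_⟩
      rw [← hgm, ← hg (n - p) (by omega), Nat.sub_add_cancel (by omega)]

theorem exists_abs_le_of_periodic {g : ℕ → ℤ} {p N : ℕ} (hp : 0 < p)
    (hg : ∀ n ≥ N, g (n + p) = g n) : ∃ C : ℤ, ∀ n, |g n| ≤ C := by
  refine ⟨(range (N + p)).sup' (nonempty_range_iff.mpr (by omega)) fun m => |g m|, fun n => ?_⟩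
  obtain ⟨m, hm, hgm⟩ := exists_lt_apply_eq_of_periodic hp hg n
  rw [hgm]
  exact le_sup' (fun m => |g m|) (mem_range.mpr hm)

theorem exists_abs_mul_countPrefix_sub_le {f : ℕ → α} {p N : ℕ} (hp : 0 < p)
    (hf : ∀ n ≥ N, f (n + p) = f n) (a : α) :
    ∃ c C : ℤ, ∀ n : ℕ, |p * (countPrefix f a n : ℤ) - c * n| ≤ C := by
  set c : ℤ := countPrefix f a (N + p) - countPrefix f a N
  refine ⟨c, exists_abs_le_of_periodic (N := N) hp fun n hn => ?_⟩
  have := countPrefix_add_sub_eq_of_periodic hf a hn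
  push_cast
  linear_combination (p : ℤ) * this

end Frequency

theorem mul_fib_sub_mul_fib_eq (a b : ℝ) (k : ℕ) :
    a * Nat.fib (k + 1) - b * Nat.fib (k + 2) =
      (a - b * φ) * Nat.fib (k + 1) - b * ψ ^ (k + 1) := by
  rw [← fib_succ_sub_goldenRatio_mul_fib]
  ring

theorem eq_mul_goldenRatio_of_abs_mul_fib_sub_le {a b C : ℝ}
    (h : ∀ k, |a * Nat.fib (k + 1) - b * Nat.fib (k + 2)| ≤ C) : a = b * φ := by
  by_contra hne
  have hx : 0 < |a - b * φ| := abs_pos.mpr (sub_ne_zero.mpr hne)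
  have hbound : ∀ k : ℕ, |a - b * φ| * k ≤ C + |b| := fun k => by
    have hψ : |ψ ^ (k + 1)| ≤ 1 :=
      pow_abs ψ (k + 1) ▸ pow_le_one₀ (abs_nonneg _)
        (abs_le.mpr ⟨neg_one_lt_goldenConj.le, goldenConj_neg.le.trans zero_le_one⟩)
    have hfib : (k : ℝ) ≤ Nat.fib (k + 1) := by
      have := Nat.le_fib_add_one (k + 1); exact_mod_cast (by omega : k ≤ Nat.fib (k + 1))
    calc |a - b * φ| * k ≤ |(a - b * φ) * Nat.fib (k + 1)| := by
          rw [abs_mul, Nat.abs_cast]; gcongr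
      _ = |(a * Nat.fib (k + 1) - b * Nat.fib (k + 2)) + b * ψ ^ (k + 1)| := by
          rw [mul_fib_sub_mul_fib_eq]; ring_nf
      _ ≤ C + |b| * 1 := by
          grw [abs_add_le, abs_mul, h k, hψ]
      _ = C + |b| := by ring
  obtain ⟨k, hk⟩ := exists_nat_gt ((C + |b|) / |a - b * φ|)
  rw [div_lt_iff₀ hx] at hk
  linarith [hbound k]

theorem eq_zero_of_abs_mul_fib_sub_le {a b C : ℤ}
    (h : ∀ k, |a * Nat.fib (k + 1) - b * Nat.fib (k + 2)| ≤ C) : a = 0 ∧ b = 0 := by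
  have hab : (a : ℝ) = b * φ :=
    eq_mul_goldenRatio_of_abs_mul_fib_sub_le (C := C) fun k => by exact_mod_cast h k
  have hb : b = 0 := by
    by_contra hb
    refine (irrational_iff_ne_rational φ).mp goldenRatio_irrational a b hb ?_
    rw [hab]; field_simp
  subst hb
  exact ⟨by simpa using hab, rfl⟩

def fibPrefix (k : ℕ) : List (Fin 2) := fibSubst^[k] [0]

theorem fibSubst_append (u v : List (Fin 2)) : fibSubst (u ++ v) = fibSubst u ++ fibSubst v :=
  List.flatMap_append ..

theorem fibPrefix_succ (k : ℕ) : fibPrefix (k + 1) = fibSubst (fibPrefix k) :=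
  Function.iterate_succ_apply' ..

theorem fibPrefix_add_two (k : ℕ) : fibPrefix (k + 2) = fibPrefix (k + 1) ++ fibPrefix k := by
  induction k with
  | zero => decide
  | succ k ih =>
    calc fibPrefix (k + 3) = fibSubst (fibPrefix (k + 1) ++ fibPrefix k) := by
          rw [fibPrefix_succ, ih]
      _ = fibPrefix (k + 2) ++ fibPrefix (k + 1) := by
          rw [fibSubst_append, ← fibPrefix_succ, ← fibPrefix_succ]

theorem fibPrefix_prefix_succ (k : ℕ) : fibPrefix k <+: fibPrefix (k + 1) := by
  cases k with
  | zero => decide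
  | succ k => rw [fibPrefix_add_two]; exact List.prefix_append _ _

theorem fibPrefix_prefix_of_le {k m : ℕ} (h : k ≤ m) : fibPrefix k <+: fibPrefix m := by
  induction m, h using Nat.le_induction with
  | base => exact List.prefix_refl _
  | succ m _ ih => exact ih.trans (fibPrefix_prefix_succ m)

theorem length_fibPrefix (k : ℕ) : (fibPrefix k).length = Nat.fib (k + 2) := by
  induction k using Nat.twoStepInduction with
  | zero => rfl
  | one => rfl
  | more k ih₀ ih₁ =>
    rw [fibPrefix_add_two, List.length_append, ih₁, ih₀, Nat.fib_add_two (n := k + 2)]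
    ring

theorem count_zero_fibPrefix (k : ℕ) : (fibPrefix k).count 0 = Nat.fib (k + 1) := by
  induction k using Nat.twoStepInduction with
  | zero => rfl
  | one => rfl
  | more k ih₀ ih₁ =>
    rw [fibPrefix_add_two, List.count_append, ih₁, ih₀, Nat.fib_add_two (n := k + 1)]
    ring

theorem getD_fibPrefix_of_le {k m n : ℕ} (h : k ≤ m) (hn : n < (fibPrefix k).length) :
    (fibPrefix m).getD n 0 = (fibPrefix k).getD n 0 := by
  obtain ⟨t, ht⟩ := fibPrefix_prefix_of_le h
  rw [← ht, List.getD_append _ _ _ _ hn]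

theorem fibWord_eq_getD {n k : ℕ} (hn : n < (fibPrefix k).length) :
    fibWord n = (fibPrefix k).getD n 0 := by
  have hn' : n < (fibPrefix (n + 2)).length := by
    rw [length_fibPrefix]; have := Nat.le_fib_add_one (n + 2 + 2); omega
  rcases le_total k (n + 2) with h | h
  · exact getD_fibPrefix_of_le h hn
  · exact (getD_fibPrefix_of_le h hn').symm

theorem countPrefix_fibWord_fib (k : ℕ) :
    countPrefix fibWord 0 (Nat.fib (k + 2)) = Nat.fib (k + 1) := by
  have hmap : (List.range (Nat.fib (k + 2))).map fibWord = fibPrefix k := by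
    refine List.ext_getElem (by simp [length_fibPrefix]) fun i hi _ => ?_
    have hi' : i < (fibPrefix k).length := by simpa [length_fibPrefix] using hi
    simp [fibWord_eq_getD hi', List.getElem?_eq_getElem hi']
  rw [countPrefix, hmap, count_zero_fibPrefix]

theorem fibWord_not_eventually_periodic :
    ¬ ∃ p : ℕ, 0 < p ∧ ∃ N : ℕ, ∀ n ≥ N, fibWord (n + p) = fibWord n := by
  rintro ⟨p, hp, N, hper⟩
  obtain ⟨c, C, hC⟩ := exists_abs_mul_countPrefix_sub_le hp hper 0
  have hfib : ∀ k, |p * Nat.fib (k + 1) - c * Nat.fib (k + 2)| ≤ C := fun k => by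
    simpa [countPrefix_fibWord_fib] using hC (Nat.fib (k + 2))
  have hp0 : (p : ℤ) = 0 := (eq_zero_of_abs_mul_fib_sub_le hfib).1
  omega
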